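/- Let n ≥ 4 be an integer, set a = cos(π/n) if n is even and a = cos(2π/n) if n is odd, and let k be an odd integer with 1 ≤ k ≤ n−1; set x_k = cos(kπ/n). With F_a(x) := (1+a)·(T_n(x) + 2 − ((x+2)/n²)·T_n′(x)) − (1/n²)·(1−x)·(n² − T_n′(x)) and 𝓛_k(f;x) := (1 − x_k·x)·f(x_k) + (1 − x_k²)·(x − x_k)·f′(x_k), the following hold: 𝓛_k(F_a;x) > 0 for every x ∈ (−1, 0] when 1 ≤ k < n−2; 𝓛_{n−2}(F_a;x) is identically zero when n is odd; and 𝓛_{n−1}(F_a;x) is identically zero when n is even. -/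

import Mathlib

/-!
For odd `k < n` the node `x_k = cos (kπ/n)` is a minimum of `T_n`: `T_n(x_k) = -1` and
`T_n'(x_k) = 0`, so the Chebyshev equation `(1 - x²) T_n'' = x T_n' - n² T_n` gives
`(1 - x_k²) T_n''(x_k) = n²`. With these three values `𝓛_k(F_a; x)` factors as
`(a + x_k)(1 + x_k)(1 + x_k - 2x)`. Writing `a = cos (mπ/n)` with `m ∈ {1, 2}`, the factor
`a + x_k = cos (mπ/n) + cos (kπ/n)` is positive when `m + k < n` and vanishes when `m + k = n`.
-/

open Polynomial Real

/-- The `n`-th Chebyshev polynomial of the first kind, as a real polynomial. -/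
noncomputable def chebT (n : ℕ) : Polynomial ℝ := Polynomial.Chebyshev.T ℝ (n : ℤ)

/-- `F_a(x) = (1+a)(T_n(x) + 2 - ((x+2)/n²) T_n'(x)) - (1/n²)(1-x)(n² - T_n'(x))`. -/
noncomputable def F (n : ℕ) (a x : ℝ) : ℝ :=
  (1 + a) * ((chebT n).eval x + 2 - (x + 2) / (n : ℝ) ^ 2 * (derivative (chebT n)).eval x)
    - 1 / (n : ℝ) ^ 2 * (1 - x) * ((n : ℝ) ^ 2 - (derivative (chebT n)).eval x)

/-- `𝓛(c, f; x) = (1 - c x) f(c) + (1 - c²)(x - c) f'(c)`. -/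
noncomputable def Lfun (c : ℝ) (f : ℝ → ℝ) (x : ℝ) : ℝ :=
  (1 - c * x) * f c + (1 - c ^ 2) * (x - c) * deriv f c

lemma one_sub_sq_mul_eval_derivative_derivative_chebT (n : ℕ) (x : ℝ) :
    (1 - x ^ 2) * (derivative (derivative (chebT n))).eval x
      = x * (derivative (chebT n)).eval x - (n : ℝ) ^ 2 * (chebT n).eval x := by
  simpa [chebT] using congr_arg (eval x)
    (Chebyshev.one_sub_X_sq_mul_derivative_derivative_T_eq_poly_in_T (R := ℝ) (n : ℤ))

lemma eval_chebT_cos_mul_pi_div_of_odd {n k : ℕ} (hn : n ≠ 0) (hk : Odd k) :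
    (chebT n).eval (cos (k * π / n)) = -1 := by
  rw [chebT, Chebyshev.eval_T_real_cos_int_mul_pi_div hn,
    Int.negOnePow_odd _ ((Int.odd_coe_nat k).mpr hk)]
  norm_cast

lemma eval_derivative_chebT_cos_mul_pi_div {n k : ℕ} (hk₀ : 0 < k) (hkn : k < n) :
    (derivative (chebT n)).eval (cos (k * π / n)) = 0 := by
  rw [← Polynomial.deriv]
  exact (Chebyshev.isLocalExtr_T_real (by omega) hk₀ hkn).deriv_eq_zero

lemma hasDerivAt_F (n : ℕ) (a x : ℝ) :
    HasDerivAt (F n a)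
      ((1 + a) * ((derivative (chebT n)).eval x
          - ((derivative (chebT n)).eval x + (x + 2) * (derivative (derivative (chebT n))).eval x)
            / (n : ℝ) ^ 2)
        + ((n : ℝ) ^ 2 - (derivative (chebT n)).eval x
            + (1 - x) * (derivative (derivative (chebT n))).eval x) / (n : ℝ) ^ 2) x := by
  have hT := (chebT n).hasDerivAt x
  have hT' := (derivative (chebT n)).hasDerivAt x
  have hA : HasDerivAt (fun y : ℝ => (y + 2) / (n : ℝ) ^ 2) (1 / (n : ℝ) ^ 2) x :=
    ((hasDerivAt_id x).add_const 2).div_const _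
  have hB : HasDerivAt (fun y : ℝ => 1 / (n : ℝ) ^ 2 * (1 - y)) (1 / (n : ℝ) ^ 2 * -1) x :=
    ((hasDerivAt_id x).const_sub 1).const_mul _
  exact ((((hT.add_const 2).sub (hA.mul hT')).const_mul (1 + a)).sub
    (hB.mul (hT'.const_sub _))).congr_deriv (by ring)

lemma Lfun_F_eq_of_eval_chebT_eq_neg_one {n : ℕ} (hn : n ≠ 0) (a : ℝ) {c : ℝ}
    (hT : (chebT n).eval c = -1) (hT' : (derivative (chebT n)).eval c = 0) (x : ℝ) :
    Lfun c (F n a) x = (a + c) * (1 + c) * (1 + c - 2 * x) := by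
  have hT'' : (1 - c ^ 2) * (derivative (derivative (chebT n))).eval c = (n : ℝ) ^ 2 := by
    rw [one_sub_sq_mul_eval_derivative_derivative_chebT, hT, hT']
    ring
  have hn' : (n : ℝ) ^ 2 ≠ 0 := by positivity
  rw [Lfun, (hasDerivAt_F n a c).deriv, F, hT, hT']
  field_simp
  linear_combination (-(1 + a) * (c + 2) + (1 - c)) * (x - c) * hT''

lemma Lfun_F_cos_mul_pi_div_of_odd {n k : ℕ} (hk : Odd k) (hkn : k < n) (a x : ℝ) :
    Lfun (cos (k * π / n)) (F n a) x
      = (a + cos (k * π / n)) * (1 + cos (k * π / n)) * (1 + cos (k * π / n) - 2 * x) :=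
  Lfun_F_eq_of_eval_chebT_eq_neg_one (by omega) a (eval_chebT_cos_mul_pi_div_of_odd (by omega) hk)
    (eval_derivative_chebT_cos_mul_pi_div hk.pos hkn) x

lemma cos_add_cos_pos {s t : ℝ} (hs : 0 ≤ s) (ht : 0 ≤ t) (hst : s + t < π) :
    0 < cos s + cos t := by
  have := cos_lt_cos_of_nonneg_of_le_pi hs (by linarith) (by linarith : s < π - t)
  rw [cos_pi_sub] at this
  linarith

lemma cos_mul_pi_div_add_cos_mul_pi_div_pos {m k n : ℕ} (h : m + k < n) :
    0 < cos (m * π / n) + cos (k * π / n) := by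
  have hn : (0 : ℝ) < n := by exact_mod_cast (by omega : 0 < n)
  have hmkn : (m : ℝ) + k < n := by exact_mod_cast h
  refine cos_add_cos_pos (by positivity) (by positivity) ?_
  rw [← add_div, ← add_mul, div_lt_iff₀ hn, mul_comm π]
  exact mul_lt_mul_of_pos_right hmkn pi_pos

lemma cos_mul_pi_div_add_cos_mul_pi_div_eq_zero {m k n : ℕ} (h : m + k = n) (hn : n ≠ 0) :
    cos (m * π / n) + cos (k * π / n) = 0 := by
  have hmk : (m : ℝ) + k = n := by exact_mod_cast h
  have hk : (k : ℝ) * π / n = π - m * π / n := by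
    rw [eq_sub_iff_add_eq, ← add_div, ← add_mul, add_comm, hmk,
      mul_div_cancel_left₀ π (Nat.cast_ne_zero.mpr hn)]
  rw [hk, cos_pi_sub, add_neg_cancel]

theorem L_of_F_odd_k_general (n : ℕ) (a : ℝ)
    (ha : a = if Even n then Real.cos (π / n) else Real.cos (2 * π / n))
    (k : ℕ) (hko : Odd k) :
    (k < n - 2 → ∀ x ∈ Set.Ioc (-1 : ℝ) 0, 0 < Lfun (Real.cos (k * π / n)) (F n a) x) ∧
    (Odd n → k = n - 2 → ∀ x : ℝ, Lfun (Real.cos (k * π / n)) (F n a) x = 0) ∧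
    (Even n → k = n - 1 → ∀ x : ℝ, Lfun (Real.cos (k * π / n)) (F n a) x = 0) := by
  have hk_pos := hko.pos
  have ha₁ (he : Even n) : a = cos ((1 : ℕ) * π / n) := by simp [ha, he]
  have ha₂ (ho : Odd n) : a = cos ((2 : ℕ) * π / n) := by simp [ha, Nat.not_even_iff_odd.mpr ho]
  refine ⟨fun hk x hx => ?_, fun ho hk x => ?_, fun he hk x => ?_⟩
  · rw [Lfun_F_cos_mul_pi_div_of_odd hko (by omega)]
    have hac : 0 < a + cos (k * π / n) := by
      rcases n.even_or_odd with he | ho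
      · rw [ha₁ he]; exact cos_mul_pi_div_add_cos_mul_pi_div_pos (by omega)
      · rw [ha₂ ho]; exact cos_mul_pi_div_add_cos_mul_pi_div_pos (by omega)
    have hc : 0 < 1 + cos (k * π / n) := by
      simpa using cos_mul_pi_div_add_cos_mul_pi_div_pos (m := 0) (k := k) (n := n) (by omega)
    have hlin : 0 < 1 + cos (k * π / n) - 2 * x := by linarith [hx.2]
    positivity
  · rw [Lfun_F_cos_mul_pi_div_of_odd hko (by omega), ha₂ ho,
      cos_mul_pi_div_add_cos_mul_pi_div_eq_zero (by omega) (by omega), zero_mul, zero_mul]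
  · rw [Lfun_F_cos_mul_pi_div_of_odd hko (by omega), ha₁ he,
      cos_mul_pi_div_add_cos_mul_pi_div_eq_zero (by omega) (by omega), zero_mul, zero_mul]

/-- For `n ≥ 4`, `a = cos(π/n)` for even `n`, `a = cos(2π/n)` for odd `n`, and odd
`k` with `1 ≤ k ≤ n-1`: `𝓛_k(F_a;x) > 0` on `(-1,0]` when `k < n-2`;
`𝓛_{n-2}(F_a;·) ≡ 0` when `n` is odd; `𝓛_{n-1}(F_a;·) ≡ 0` when `n` is even. -/
theorem L_of_F_odd_k (n : ℕ) (hn : 4 ≤ n) (a : ℝ)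
    (ha : a = if Even n then Real.cos (π / n) else Real.cos (2 * π / n))
    (k : ℕ) (hko : Odd k) (hk1 : 1 ≤ k) (hk2 : k ≤ n - 1) :
    (k < n - 2 → ∀ x ∈ Set.Ioc (-1 : ℝ) 0, 0 < Lfun (Real.cos (k * π / n)) (F n a) x) ∧
    (Odd n → k = n - 2 → ∀ x : ℝ, Lfun (Real.cos (k * π / n)) (F n a) x = 0) ∧
    (Even n → k = n - 1 → ∀ x : ℝ, Lfun (Real.cos (k * π / n)) (F n a) x = 0) :=
  L_of_F_odd_k_general n a ha k hko
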